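/- Let ρ be a Sylvester rank function on an additive category with cokernels. If α : A → B is a ρ-full map and β : A → C is any map, then the pushout α' : C → D of α along β is again ρ-full. -/

import Mathlib

open CategoryTheory CategoryTheory.Limits

universe v u

/-- A Sylvester rank function on an additive category with cokernels. -/
structure SylvesterRank (C : Type u) [Category.{v} C] [Preadditive C]
    [HasCokernels C] [HasBinaryBiproducts C] where
  rk : C → ℕ
  rk_iso : ∀ {A B : C}, (A ≅ B) → rk A = rk B
  rk_biprod : ∀ A B : C, rk (A ⊞ B) = rk A + rk B
  rk_coker_le : ∀ {A B : C} (f : A ⟶ B), rk (cokernel f) ≤ rk B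
  rk_le : ∀ {A B : C} (f : A ⟶ B), rk B ≤ rk A + rk (cokernel f)

/-- A map `f : A ⟶ B` is `ρ`-full if `ρ(A) = ρ(B)` and `ρ(coker f) = 0`. -/
def SylvesterRank.IsRhoFull {C : Type u} [Category.{v} C] [Preadditive C]
    [HasCokernels C] [HasBinaryBiproducts C] (ρ : SylvesterRank C)
    {A B : C} (f : A ⟶ B) : Prop :=
  ρ.rk A = ρ.rk B ∧ ρ.rk (cokernel f) = 0

/-- The pushout of `α : A ⟶ B` along `β : A ⟶ C'` is the component
`C' ⟶ coker (α β)` of the canonical map `B ⊞ C' ⟶ coker ((α β) : A ⟶ B ⊞ C')`. -/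
noncomputable def pushoutAlong {C : Type u} [Category.{v} C] [Preadditive C]
    [HasCokernels C] [HasBinaryBiproducts C]
    {A B C' : C} (α : A ⟶ B) (β : A ⟶ C') :
    C' ⟶ cokernel (biprod.lift α β) :=
  biprod.inr ≫ cokernel.π (biprod.lift α β)

/-!
The cokernel of the pushout `α'` is a quotient of `coker α` (the square is a pushout), so
`ρ(coker α') ≤ ρ(coker α) = 0`. With `D = coker (α β)`, the right exact sequences
`C' → D → coker α' → 0` and `A → B ⊕ C' → D → 0` give `ρ(D) ≤ ρ(C')` and
`ρ(B) + ρ(C') ≤ ρ(A) + ρ(D)`, and `ρ(A) = ρ(B)` closes the gap.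
-/

namespace SylvesterRank

variable {C : Type u} [Category.{v} C] [Preadditive C] [HasCokernels C] [HasBinaryBiproducts C]

lemma rk_eq_zero_of_isZero (ρ : SylvesterRank C) {Z : C} (hZ : IsZero Z) : ρ.rk Z = 0 := by
  have h := ρ.rk_iso (hZ.iso (biprod_isZero_iff Z Z |>.mpr ⟨hZ, hZ⟩))
  rw [ρ.rk_biprod] at h
  omega

lemma rk_le_of_epi (ρ : SylvesterRank C) {X Y : C} (f : X ⟶ Y) [Epi f] : ρ.rk Y ≤ ρ.rk X := by
  simpa [ρ.rk_eq_zero_of_isZero (isZero_cokernel_of_epi f)] using ρ.rk_le f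

lemma rk_le_rk_cokernel_of_comp_eq_zero (ρ : SylvesterRank C) {X Y Z : C} (f : X ⟶ Y)
    (g : Y ⟶ Z) [Epi g] (w : f ≫ g = 0) : ρ.rk Z ≤ ρ.rk (cokernel f) :=
  ρ.rk_le_of_epi (cokernel.desc f g w)

end SylvesterRank

lemma epi_inl_comp_of_inr_comp_eq_zero {C : Type u} [Category.{v} C] [HasZeroMorphisms C]
    [HasBinaryBiproducts C] {X Y Z : C} (g : X ⊞ Y ⟶ Z) [Epi g] (w : biprod.inr ≫ g = 0) :
    Epi (biprod.inl ≫ g) := by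
  have hg : g = (biprod.fst : X ⊞ Y ⟶ X) ≫ biprod.inl ≫ g := by
    ext <;> simp [w]
  have : Epi ((biprod.fst : X ⊞ Y ⟶ X) ≫ biprod.inl ≫ g) := by rwa [← hg]
  exact epi_of_epi (biprod.fst : X ⊞ Y ⟶ X) _

section Pushout

variable {C : Type u} [Category.{v} C] [Preadditive C] [HasCokernels C] [HasBinaryBiproducts C]
  {A B C' : C} (α : A ⟶ B) (β : A ⟶ C')

lemma inr_comp_π_comp_π_pushoutAlong :
    biprod.inr ≫ cokernel.π (biprod.lift α β) ≫ cokernel.π (pushoutAlong α β) = 0 := by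
  rw [← Category.assoc]
  exact cokernel.condition _

instance epi_inl_comp_π_comp_π_pushoutAlong :
    Epi (biprod.inl ≫ cokernel.π (biprod.lift α β) ≫ cokernel.π (pushoutAlong α β)) :=
  epi_inl_comp_of_inr_comp_eq_zero _ (inr_comp_π_comp_π_pushoutAlong α β)

lemma comp_inl_comp_π_comp_π_pushoutAlong :
    α ≫ biprod.inl ≫ cokernel.π (biprod.lift α β) ≫ cokernel.π (pushoutAlong α β) = 0 := by
  have hα : α ≫ biprod.inl = biprod.lift α β - β ≫ biprod.inr := by
    rw [biprod.lift_eq]; abel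
  rw [← Category.assoc, hα, Preadditive.sub_comp, Category.assoc,
    inr_comp_π_comp_π_pushoutAlong, comp_zero, cokernel.condition_assoc, zero_comp,
    sub_zero]

lemma SylvesterRank.rk_cokernel_pushoutAlong_le (ρ : SylvesterRank C) :
    ρ.rk (cokernel (pushoutAlong α β)) ≤ ρ.rk (cokernel α) :=
  ρ.rk_le_rk_cokernel_of_comp_eq_zero α _ (comp_inl_comp_π_comp_π_pushoutAlong α β)

end Pushout

/-- If `α` is `ρ`-full, then the pushout of `α` along any map `β` is `ρ`-full. -/
theorem rhoFull_pushout {C : Type u} [Category.{v} C] [Preadditive C]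
    [HasCokernels C] [HasBinaryBiproducts C] (ρ : SylvesterRank C)
    {A B C' : C} (α : A ⟶ B) (β : A ⟶ C')
    (hα : ρ.IsRhoFull α) :
    ρ.IsRhoFull (pushoutAlong α β) := by
  obtain ⟨hAB, hcoker⟩ := hα
  have hcoker' : ρ.rk (cokernel (pushoutAlong α β)) = 0 := by
    have := ρ.rk_cokernel_pushoutAlong_le α β
    omega
  have hD := ρ.rk_le (pushoutAlong α β)
  have hBC := ρ.rk_le (biprod.lift α β)
  rw [ρ.rk_biprod] at hBC
  exact ⟨by omega, hcoker'⟩
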